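/- arXiv:1712.09082 — 7 statements merged into one kernel-verified Lean document; each statement's English description precedes it below -/
import Mathlib

section
/- For any binary probability vector θ = (φ, 1-φ) with 0 < φ < 1/2, it holds that H(θ)·S(θ) < V(θ)² + φ²(1-φ)(1-2φ)·(log((1-φ)/φ))³, where H(θ) = φ·log(1/φ) + (1-φ)·log(1/(1-φ)), V(θ) = φ(1-φ)·(log((1-φ)/φ))², and S(θ) = φ(1-φ)(1-2φ)·(log((1-φ)/φ))³. -/
/-!
Write `L = log ((1 - φ) / φ) > 0`. Dividing by `φ (1 - φ) L³ > 0` reduces the claim to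
`(1 - 2φ) H < φ (1 - φ) L + φ (1 - 2φ)`, and since `H = φ L - log (1 - φ)` this reads
`(1 - 2φ) (-log (1 - φ) - φ) < φ² L`. It follows from the two elementary bounds
`-log (1 - φ) < φ / (1 - φ)` and `L ≥ 1 - φ / (1 - φ) = (1 - 2φ) / (1 - φ)`.
-/

open Real

lemma Real.neg_log_lt_inv_sub_one {x : ℝ} (hx : 0 < x) (hx1 : x ≠ 1) : -log x < x⁻¹ - 1 := by
  simpa only [log_inv] using log_lt_sub_one_of_pos (inv_pos.mpr hx) (inv_ne_one.mpr hx1)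

lemma Real.binEntropy_eq_mul_log_div_sub_log {p : ℝ} (hp0 : p ≠ 0) (hp1 : p ≠ 1) :
    binEntropy p = p * log ((1 - p) / p) - log (1 - p) := by
  rw [binEntropy, log_inv, log_inv, log_div (sub_ne_zero.mpr hp1.symm) hp0]
  ring

lemma Real.one_sub_two_mul_mul_binEntropy_lt {p : ℝ} (hp0 : 0 < p) (hp : p < 1 / 2) :
    (1 - 2 * p) * binEntropy p < p * (1 - p) * log ((1 - p) / p) + p * (1 - 2 * p) := by
  have hq : 0 < 1 - p := by linarith
  have hlog_div : 1 - 2 * p ≤ (1 - p) * log ((1 - p) / p) := by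
    have h := one_sub_inv_le_log_of_pos (div_pos hq hp0)
    rw [inv_div] at h
    calc 1 - 2 * p = (1 - p) * (1 - p / (1 - p)) := by field_simp; ring
      _ ≤ (1 - p) * log ((1 - p) / p) := by gcongr
  have hlog_one_sub : -((1 - p) * log (1 - p)) < p := by
    have h := neg_log_lt_inv_sub_one hq (by linarith)
    calc -((1 - p) * log (1 - p)) = (1 - p) * -log (1 - p) := by ring
      _ < (1 - p) * ((1 - p)⁻¹ - 1) := by gcongr
      _ = p := by field_simp; ring
  rw [binEntropy_eq_mul_log_div_sub_log hp0.ne' (by linarith)]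
  refine lt_of_mul_lt_mul_left ?_ hq.le
  linear_combination mul_lt_mul_of_pos_left hlog_one_sub (by linarith : (0 : ℝ) < 1 - 2 * p) +
    mul_le_mul_of_nonneg_left hlog_div (sq_nonneg p)

theorem stmt_7 (φ : ℝ) (hφ0 : 0 < φ) (hφ1 : φ < 1/2)
    (H V S : ℝ)
    (hH : H = φ * Real.log (1 / φ) + (1 - φ) * Real.log (1 / (1 - φ)))
    (hV : V = φ * (1 - φ) * (Real.log ((1 - φ) / φ)) ^ 2)
    (hS : S = φ * (1 - φ) * (1 - 2*φ) * (Real.log ((1 - φ) / φ)) ^ 3) :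
    H * S < V ^ 2 + φ ^ 2 * (1 - φ) * (1 - 2*φ) * (Real.log ((1 - φ) / φ)) ^ 3 := by
  have hH' : H = binEntropy φ := by rw [hH, binEntropy, one_div, one_div]
  have hL : 0 < log ((1 - φ) / φ) := log_pos (by rw [lt_div_iff₀ hφ0]; linarith)
  have hscale : 0 < φ * (1 - φ) * log ((1 - φ) / φ) ^ 3 := by
    have : 0 < 1 - φ := by linarith
    positivity
  have key := mul_lt_mul_of_pos_left (one_sub_two_mul_mul_binEntropy_lt hφ0 hφ1) hscale
  rw [hH', hV, hS]
  linear_combination key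
end

section
/- Every binary probability vector θ = (φ, 1-φ) with 0 < φ < 1/2 satisfies the skewentropy condition: V(θ)² + 2·H(θ)·V(θ) - H(θ)·S(θ) > 0, where H(θ) = φ·log(1/φ) + (1-φ)·log(1/(1-φ)), V(θ) = φ(1-φ)·(log((1-φ)/φ))², and S(θ) = φ(1-φ)(1-2φ)·(log((1-φ)/φ))³. -/
/-!
With `L = log ((1 - φ) / φ) > 0` and `c = -log (1 - φ) ≥ 0` the entropy is `H = φ L + c`, and
`V² + 2 H V - H S = φ (1 - φ) L² (φ² L² + 2 φ L + 2 c - c (1 - 2 φ) L)`.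
The bracket is positive because `log x ≤ x - 1` gives `c ≤ φ / (1 - φ)`, hence `c (1 - 2 φ) ≤ φ`
and the only negative term is dominated by `φ L`.
-/

open Real

lemma binary_entropy_eq_mul_log_odds_sub_log {p : ℝ} (hp0 : 0 < p) (hp1 : p < 1) :
    p * log (1 / p) + (1 - p) * log (1 / (1 - p)) = p * log ((1 - p) / p) - log (1 - p) := by
  rw [one_div, one_div, log_inv, log_inv, log_div (sub_pos.2 hp1).ne' hp0.ne']
  ring

lemma neg_log_one_sub_le_div {p : ℝ} (hp : p < 1) : -log (1 - p) ≤ p / (1 - p) := by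
  have hq : 0 < 1 - p := sub_pos.2 hp
  have h := one_sub_inv_le_log_of_pos hq
  have hinv : 1 - (1 - p)⁻¹ = -(p / (1 - p)) := by field_simp; ring
  linarith

lemma neg_log_one_sub_mul_le {p : ℝ} (hp0 : 0 ≤ p) (hp1 : p < 1) :
    -log (1 - p) * (1 - 2 * p) ≤ p := by
  have hq : 0 < 1 - p := sub_pos.2 hp1
  have hc : 0 ≤ -log (1 - p) := neg_nonneg.2 (log_nonpos hq.le (by linarith))
  have hcp : -log (1 - p) * (1 - p) ≤ p := by
    have := mul_le_mul_of_nonneg_right (neg_log_one_sub_le_div hp1) hq.le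
    rwa [div_mul_cancel₀ _ hq.ne'] at this
  nlinarith

theorem stmt_8 (φ : ℝ) (hφ0 : 0 < φ) (hφ1 : φ < 1/2)
    (H V S : ℝ)
    (hH : H = φ * Real.log (1 / φ) + (1 - φ) * Real.log (1 / (1 - φ)))
    (hV : V = φ * (1 - φ) * (Real.log ((1 - φ) / φ)) ^ 2)
    (hS : S = φ * (1 - φ) * (1 - 2*φ) * (Real.log ((1 - φ) / φ)) ^ 3) :
    V ^ 2 + 2 * H * V - H * S > 0 := by
  have hq : 0 < 1 - φ := by linarith
  set L := log ((1 - φ) / φ)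
  set c := -log (1 - φ)
  have hL : 0 < L := log_pos (by rw [lt_div_iff₀ hφ0]; linarith)
  have hc : 0 ≤ c := neg_nonneg.2 (log_nonpos hq.le (by linarith))
  have hHL : H = φ * L + c := by
    rw [hH, binary_entropy_eq_mul_log_odds_sub_log hφ0 (by linarith)]
    ring
  have hcL : c * (1 - 2 * φ) * L ≤ φ * L :=
    mul_le_mul_of_nonneg_right (neg_log_one_sub_mul_le hφ0.le (by linarith)) hL.le
  have hbracket : 0 < φ ^ 2 * L ^ 2 + 2 * φ * L + 2 * c - c * (1 - 2 * φ) * L := by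
    nlinarith [mul_pos hφ0 hL]
  calc V ^ 2 + 2 * H * V - H * S
        = φ * (1 - φ) * L ^ 2 * (φ ^ 2 * L ^ 2 + 2 * φ * L + 2 * c - c * (1 - 2 * φ) * L) := by
          rw [hV, hS, hHL]; ring
    _ > 0 := mul_pos (by positivity) hbracket
end

section
/- Let θ = (θ_1,…,θ_k) be a probability vector with all θ_i > 0, not the uniform distribution, such that |log(1/θ_i) - H(θ)| < 2 for all i, where H(θ) = Σ_i θ_i·log(1/θ_i). Then θ satisfies the skewentropy condition: V(θ)² + 2·H(θ)·V(θ) - H(θ)·S(θ) > 0, where V(θ) = Σ_i θ_i·(log(1/θ_i) - H(θ))² and S(θ) = Σ_i θ_i·(log(1/θ_i) - H(θ))³. -/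
theorem stmt_10 {k : ℕ} (θ : Fin k → ℝ)
    (hpos : ∀ i, 0 < θ i) (hsum : ∑ i, θ i = 1)
    (hnonunif : θ ≠ fun _ => 1 / (k : ℝ))
    (H V S : ℝ)
    (hH : H = ∑ i, θ i * Real.log (1 / θ i))
    (hV : V = ∑ i, θ i * (Real.log (1 / θ i) - H) ^ 2)
    (hS : S = ∑ i, θ i * (Real.log (1 / θ i) - H) ^ 3)
    (hclose : ∀ i, |Real.log (1 / θ i) - H| < 2) :
    V ^ 2 + 2 * H * V - H * S > 0 := by
  have hle1 : ∀ i, θ i ≤ 1 := by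
    intro i
    calc θ i ≤ ∑ j, θ j := Finset.single_le_sum (fun j _ => (hpos j).le) (Finset.mem_univ i)
    _ = 1 := hsum
  have hHnn : 0 ≤ H := by
    rw [hH]
    apply Finset.sum_nonneg
    intro i _
    apply mul_nonneg (hpos i).le
    apply Real.log_nonneg
    rw [le_div_iff₀ (hpos i)]
    simpa using hle1 i
  have hVnn : 0 ≤ V := by
    rw [hV]
    exact Finset.sum_nonneg fun i _ => mul_nonneg (hpos i).le (sq_nonneg _)
  have hVpos : 0 < V := by
    rcases hVnn.lt_or_eq with h | h
    · exact h
    exfalso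
    apply hnonunif
    -- V = 0 forces all log(1/θ i) = H, hence θ constant, hence uniform
    have hzero : ∀ i ∈ Finset.univ, θ i * (Real.log (1 / θ i) - H) ^ 2 = 0 := by
      intro i _
      have := (Finset.sum_eq_zero_iff_of_nonneg
        (fun i _ => mul_nonneg (hpos i).le (sq_nonneg _))).mp (hV ▸ h.symm : (∑ i, θ i * (Real.log (1 / θ i) - H) ^ 2) = 0)
      exact this i (Finset.mem_univ i)
    have hconst : ∀ i, θ i = Real.exp (-H) := by
      intro i
      have h0 := hzero i (Finset.mem_univ i)
      have h1 : (Real.log (1 / θ i) - H) ^ 2 = 0 := by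
        rcases mul_eq_zero.mp h0 with h | h
        · exact absurd h (hpos i).ne'
        · exact h
      have h2 : Real.log (1 / θ i) = H := by
        have := pow_eq_zero_iff (n := 2) (by norm_num) |>.mp h1
        linarith
      have h3 : Real.log (θ i) = -H := by
        rw [one_div, Real.log_inv] at h2; linarith
      rw [← h3, Real.exp_log (hpos i)]
    have hk : 0 < k := by
      by_contra hk
      push_neg at hk
      interval_cases k
      simp at hsum
    have hsum' : (k : ℝ) * Real.exp (-H) = 1 := by
      calc (k : ℝ) * Real.exp (-H) = ∑ _i : Fin k, Real.exp (-H) := by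
            simp [Finset.sum_const, mul_comm]
      _ = ∑ i, θ i := by exact Finset.sum_congr rfl fun i _ => (hconst i).symm
      _ = 1 := hsum
    funext i
    rw [hconst i]
    field_simp at hsum' ⊢
    linarith [hsum']
  have hSle : S ≤ 2 * V := by
    rw [hS, hV, Finset.mul_sum]
    apply Finset.sum_le_sum
    intro i _
    set x := Real.log (1 / θ i) - H with hx
    have hxlt : x < 2 := lt_of_abs_lt (hclose i)
    have : x ^ 3 ≤ 2 * x ^ 2 := by nlinarith [sq_nonneg x]
    calc θ i * x ^ 3 ≤ θ i * (2 * x ^ 2) := by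
          exact mul_le_mul_of_nonneg_left this (hpos i).le
    _ = 2 * (θ i * x ^ 2) := by ring
  nlinarith [mul_nonneg hHnn (sub_nonneg.mpr hSle), sq_nonneg V]
end

section
/- Let θ = (θ_1,…,θ_k) be a probability vector with e^{-1}/k < θ_i < e/k for all i and θ not uniform. Then θ satisfies the skewentropy condition: V(θ)² + 2·H(θ)·V(θ) - H(θ)·S(θ) > 0, where H(θ) = Σ_i θ_i·log(1/θ_i), V(θ) = Σ_i θ_i·(log(1/θ_i) - H(θ))², S(θ) = Σ_i θ_i·(log(1/θ_i) - H(θ))³. -/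
/-!
Write `a i = log (1 / θ i)`, so that `H`, `V`, `S` are the mean and the second and third central
moments of `a` under `θ`, and `V ^ 2 + 2 H V - H S = V ^ 2 + H (2 V - S)`. Non-uniformity makes
`V > 0`, and `H ≥ 0` as for any entropy. The bounds on `θ` put every `a i`, hence also their mean
`H`, within distance `1` of `log k`; so `a i - H < 2`, which gives `S ≤ 2 V`.
-/

open Finset Real

lemma log_one_div_mem_Ioo {k θ : ℝ} (hk : 0 < k) (hθ : exp (-1) / k < θ ∧ θ < exp 1 / k) :
    log (1 / θ) ∈ Set.Ioo (log k - 1) (log k + 1) := by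
  have hθpos : 0 < θ := (by positivity : 0 < exp (-1) / k).trans hθ.1
  have hlow := log_lt_log (by positivity) hθ.1
  have hupp := log_lt_log hθpos hθ.2
  rw [log_div (exp_ne_zero _) hk.ne', log_exp] at hlow hupp
  rw [one_div, log_inv]
  constructor <;> linarith

section WeightedSums

variable {ι : Type*} [Fintype ι] {w : ι → ℝ}

lemma lt_sum_mul_of_forall_lt (hw : ∀ i, 0 < w i) (hsum : ∑ i, w i = 1) {a : ι → ℝ} {b : ℝ}
    (h : ∀ i, b < a i) : b < ∑ i, w i * a i := by
  have hne : (univ : Finset ι).Nonempty := by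
    by_contra hempty
    simp [not_nonempty_iff_eq_empty.mp hempty] at hsum
  calc b = ∑ i, w i * b := by rw [← sum_mul, hsum, one_mul]
    _ < ∑ i, w i * a i := sum_lt_sum_of_nonempty hne fun i _ => mul_lt_mul_of_pos_left (h i) (hw i)

lemma sum_mul_log_one_div_nonneg (hw : ∀ i, 0 ≤ w i) (hsum : ∑ i, w i = 1) :
    0 ≤ ∑ i, w i * log (1 / w i) := by
  refine sum_nonneg fun i _ => ?_
  have hle : w i ≤ 1 := hsum ▸ single_le_sum (fun j _ => hw j) (mem_univ i)
  simpa [negMulLog, log_inv] using negMulLog_nonneg (hw i) hle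

lemma sum_mul_sq_pos (hw : ∀ i, 0 < w i) {x : ι → ℝ} (hx : ∃ i, x i ≠ 0) :
    0 < ∑ i, w i * x i ^ 2 := by
  obtain ⟨j, hj⟩ := hx
  exact sum_pos' (fun i _ => mul_nonneg (hw i).le (sq_nonneg _))
    ⟨j, mem_univ j, mul_pos (hw j) (pow_two_pos_of_ne_zero hj)⟩

lemma sum_mul_pow_three_le (hw : ∀ i, 0 ≤ w i) {x : ι → ℝ} {c : ℝ} (hx : ∀ i, x i ≤ c) :
    ∑ i, w i * x i ^ 3 ≤ c * ∑ i, w i * x i ^ 2 := by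
  rw [mul_sum, ← sub_nonneg, ← sum_sub_distrib]
  refine sum_nonneg fun i _ => ?_
  have : 0 ≤ w i * x i ^ 2 * (c - x i) :=
    mul_nonneg (mul_nonneg (hw i) (sq_nonneg _)) (sub_nonneg.mpr (hx i))
  linarith

end WeightedSums

lemma eq_one_div_of_forall_eq {k : ℕ} {θ : Fin k → ℝ} {c : ℝ} (hc : ∀ i, θ i = c)
    (hsum : ∑ i, θ i = 1) : θ = fun _ => 1 / (k : ℝ) := by
  simp only [hc, sum_const, card_univ, Fintype.card_fin, nsmul_eq_mul] at hsum
  funext i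
  rw [hc, eq_one_div_of_mul_eq_one_right hsum]

theorem stmt_12_general {k : ℕ} (θ : Fin k → ℝ)
    (hsum : ∑ i, θ i = 1)
    (hnonunif : θ ≠ fun _ => 1 / (k : ℝ))
    (hbound : ∀ i, Real.exp (-1) / k < θ i ∧ θ i < Real.exp 1 / k)
    (H V S : ℝ)
    (hH : H = ∑ i, θ i * Real.log (1 / θ i))
    (hV : V = ∑ i, θ i * (Real.log (1 / θ i) - H) ^ 2)
    (hS : S = ∑ i, θ i * (Real.log (1 / θ i) - H) ^ 3) :
    V ^ 2 + 2 * H * V - H * S > 0 := by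
  have hk : (0 : ℝ) < k := by
    rcases k with _ | k
    · simp at hsum
    · positivity
  have hpos : ∀ i, 0 < θ i := fun i => (by positivity : 0 < exp (-1) / k).trans (hbound i).1
  have ha := fun i => log_one_div_mem_Ioo hk (hbound i)
  have hH_lower : log k - 1 < H := hH ▸ lt_sum_mul_of_forall_lt hpos hsum fun i => (ha i).1
  have hH_nonneg : 0 ≤ H := hH ▸ sum_mul_log_one_div_nonneg (fun i => (hpos i).le) hsum
  have hV_pos : 0 < V := by
    refine hV ▸ sum_mul_sq_pos hpos ?_
    by_contra! hconst
    refine hnonunif (eq_one_div_of_forall_eq (c := exp (-H)) (fun i => ?_) hsum)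
    rw [← sub_eq_zero.mp (hconst i), one_div, log_inv, neg_neg, exp_log (hpos i)]
  have hS_le : S ≤ 2 * V := hS ▸ hV ▸
    sum_mul_pow_three_le (fun i => (hpos i).le) fun i => by linarith [(ha i).2]
  nlinarith [mul_nonneg hH_nonneg (sub_nonneg.mpr hS_le), pow_pos hV_pos 2]

theorem stmt_12 {k : ℕ} (θ : Fin k → ℝ)
    (hpos : ∀ i, 0 < θ i) (hsum : ∑ i, θ i = 1)
    (hnonunif : θ ≠ fun _ => 1 / (k : ℝ))
    (hbound : ∀ i, Real.exp (-1) / k < θ i ∧ θ i < Real.exp 1 / k)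
    (H V S : ℝ)
    (hH : H = ∑ i, θ i * Real.log (1 / θ i))
    (hV : V = ∑ i, θ i * (Real.log (1 / θ i) - H) ^ 2)
    (hS : S = ∑ i, θ i * (Real.log (1 / θ i) - H) ^ 3) :
    V ^ 2 + 2 * H * V - H * S > 0 :=
  stmt_12_general θ hsum hnonunif hbound H V S hH hV hS
end

section
/- For every integer k > 2 there exists ε₀ > 0 such that for all 0 < ε < ε₀, the probability vector θ with θ_i = (1-ε)/(k-1) for i < k and θ_k = ε fails the skewentropy condition, i.e., V(θ)² + 2·H(θ)·V(θ) - H(θ)·S(θ) ≤ 0, where H(θ) = (1-ε)log(k-1) + h(ε), V(θ) = ε(1-ε)(log((1-ε)/ε) - log(k-1))², and S(θ) = ε(1-ε)(1-2ε)(log((1-ε)/ε) - log(k-1))³. -/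
open Real Filter Set Topology

lemma aux2' : Filter.Tendsto (fun x : ℝ => x * Real.log x ^ 2) (nhdsWithin 0 (Set.Ioi 0)) (nhds 0) := by
  have h := (Real.tendsto_pow_log_div_mul_add_atTop 1 0 2 one_ne_zero).comp
    tendsto_inv_nhdsGT_zero
  refine h.congr' ?_
  filter_upwards [self_mem_nhdsWithin] with x (hx : (0:ℝ) < x)
  simp only [Function.comp, Real.log_inv]
  field_simp
  ring

lemma aux1' : Filter.Tendsto (fun x : ℝ => x * Real.log x) (nhdsWithin 0 (Set.Ioi 0)) (nhds 0) := by
  have := (Real.continuous_mul_log.tendsto 0).mono_left (nhdsWithin_le_nhds (s := Set.Ioi (0:ℝ)))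
  simpa using this

theorem stmt_16 {k : ℕ} (hk : 2 < k) :
    ∃ ε₀ > (0 : ℝ), ∀ ε : ℝ, 0 < ε → ε < ε₀ →
      (ε * (1 - ε) * (Real.log ((1 - ε) / ε) - Real.log ((k : ℝ) - 1)) ^ 2) ^ 2
        + 2 * ((1 - ε) * Real.log ((k : ℝ) - 1)
              + (ε * Real.log (1 / ε) + (1 - ε) * Real.log (1 / (1 - ε))))
            * (ε * (1 - ε) * (Real.log ((1 - ε) / ε) - Real.log ((k : ℝ) - 1)) ^ 2)
        - ((1 - ε) * Real.log ((k : ℝ) - 1)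
              + (ε * Real.log (1 / ε) + (1 - ε) * Real.log (1 / (1 - ε))))
            * (ε * (1 - ε) * (1 - 2*ε) * (Real.log ((1 - ε) / ε) - Real.log ((k : ℝ) - 1)) ^ 3)
      ≤ 0 := by
  set c : ℝ := Real.log ((k : ℝ) - 1) with hc_def
  have hk3 : (3:ℝ) ≤ (k:ℝ) := by exact_mod_cast hk
  have hc : 0 < c := Real.log_pos (by linarith)
  set l := 𝓝[>] (0:ℝ)
  set L : ℝ → ℝ := fun ε => Real.log ((1 - ε) / ε) - c with hL_def
  set H : ℝ → ℝ := fun ε => (1 - ε) * c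
      + (ε * Real.log (1 / ε) + (1 - ε) * Real.log (1 / (1 - ε))) with hH_def
  -- eventually ε ∈ Ioo 0 (1/2)
  have hev : ∀ᶠ ε in l, ε ∈ Ioo (0:ℝ) (1/2) :=
    Ioo_mem_nhdsGT_of_mem (by norm_num : (0:ℝ) ∈ Ico (0:ℝ) (1/2))
  -- identity of the target expression
  have hid : Tendsto (fun ε : ℝ => ε) l (𝓝 0) := tendsto_id.mono_right nhdsWithin_le_nhds
  have hg : Tendsto (fun ε : ℝ => Real.log (1 - ε) - c) l (𝓝 (-c)) := by
    have : ContinuousAt (fun ε : ℝ => Real.log (1 - ε) - c) 0 := by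
      have h1 : ContinuousAt (fun ε : ℝ => (1:ℝ) - ε) 0 := by fun_prop
      exact ((Real.continuousAt_log (by norm_num)).comp h1).sub continuousAt_const
    simpa using this.tendsto.mono_left nhdsWithin_le_nhds
  -- L → atTop
  have hL : Tendsto L l atTop := by
    have h1 : Tendsto (fun ε : ℝ => -Real.log ε) l atTop :=
      tendsto_neg_atBot_atTop.comp Real.tendsto_log_nhdsGT_zero
    have h2 : Tendsto (fun ε : ℝ => -Real.log ε + (Real.log (1 - ε) - c)) l atTop :=
      h1.atTop_add hg
    refine h2.congr' ?_
    filter_upwards [hev] with ε hε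
    simp only [hL_def]
    rw [Real.log_div (by linarith [hε.2] : (1:ℝ) - ε ≠ 0) (ne_of_gt hε.1)]
    ring
  -- H → c
  have hH : Tendsto H l (𝓝 c) := by
    have h1 : Tendsto (fun ε : ℝ => (1 - ε) * c) l (𝓝 c) := by
      have := (hid.const_sub 1).mul_const c
      simpa using this
    have h2 : Tendsto (fun ε : ℝ => -(ε * Real.log ε)) l (𝓝 0) := by
      simpa using aux1'.neg
    have h3 : Tendsto (fun ε : ℝ => -((1 - ε) * Real.log (1 - ε))) l (𝓝 0) := by
      have hcont : Continuous (fun ε : ℝ => -((1 - ε) * Real.log (1 - ε))) :=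
        (Real.continuous_mul_log.comp (continuous_const.sub continuous_id)).neg
      have := (hcont.tendsto 0).mono_left (nhdsWithin_le_nhds (s := Ioi (0:ℝ)))
      simpa using this
    have := (h1.add h2).add h3
    rw [add_zero, add_zero] at this
    refine this.congr ?_
    intro ε
    rw [hH_def]
    simp only [one_div, Real.log_inv]
    ring
  -- term1 : ε (1-ε) L² → 0
  have hT1 : Tendsto (fun ε : ℝ => ε * (1 - ε) * L ε ^ 2) l (𝓝 0) := by
    have hF : Tendsto (fun ε : ℝ => (1 - ε) *
        (ε * (Real.log (1 - ε) - c) ^ 2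
          - 2 * (Real.log (1 - ε) - c) * (ε * Real.log ε)
          + ε * Real.log ε ^ 2)) l (𝓝 0) := by
      have hA : Tendsto (fun ε : ℝ => ε * (Real.log (1 - ε) - c) ^ 2) l (𝓝 0) := by
        have := hid.mul (hg.pow 2)
        simpa using this
      have hB : Tendsto (fun ε : ℝ => 2 * (Real.log (1 - ε) - c) * (ε * Real.log ε)) l (𝓝 0) := by
        have := ((hg.const_mul 2).mul aux1')
        simpa using this
      have hone : Tendsto (fun ε : ℝ => (1:ℝ) - ε) l (𝓝 1) := by
        have := hid.const_sub 1; simpa using this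
      have := hone.mul ((hA.sub hB).add aux2')
      simpa using this
    refine hF.congr' ?_
    filter_upwards [hev] with ε hε
    simp only [hL_def]
    rw [Real.log_div (by linarith [hε.2] : (1:ℝ) - ε ≠ 0) (ne_of_gt hε.1)]
    ring
  -- bracket → atBot
  have hB : Tendsto (fun ε : ℝ => ε * (1 - ε) * L ε ^ 2 + 2 * H ε - H ε * (1 - 2*ε) * L ε)
      l atBot := by
    have h3 : Tendsto (fun ε : ℝ => H ε * (1 - 2*ε)) l (𝓝 c) := by
      have h2e : Tendsto (fun ε : ℝ => (1:ℝ) - 2*ε) l (𝓝 1) := by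
        have := (hid.const_mul 2).const_sub 1; simpa using this
      have := hH.mul h2e; simpa using this
    have h4 : Tendsto (fun ε : ℝ => H ε * (1 - 2*ε) * L ε) l atTop :=
      (h3.pos_mul_atTop hc hL)
    have h5 : Tendsto (fun ε : ℝ => -(H ε * (1 - 2*ε) * L ε)) l atBot :=
      tendsto_neg_atTop_atBot.comp h4
    have h6 : Tendsto (fun ε : ℝ => ε * (1 - ε) * L ε ^ 2 + 2 * H ε) l (𝓝 (0 + 2*c)) :=
      hT1.add (hH.const_mul 2)
    have := h6.add_atBot h5
    refine this.congr fun ε => by ring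
  have hfin : ∀ᶠ ε in l,
      ε * (1 - ε) * L ε ^ 2 + 2 * H ε - H ε * (1 - 2*ε) * L ε < 0 :=
    hB.eventually (eventually_lt_atBot 0)
  have hmain : ∀ᶠ ε in l,
      (ε * (1 - ε) * L ε ^ 2) ^ 2 + 2 * H ε * (ε * (1 - ε) * L ε ^ 2)
        - H ε * (ε * (1 - ε) * (1 - 2*ε) * L ε ^ 3) ≤ 0 := by
    filter_upwards [hev, hfin] with ε hε hb
    have hV : 0 ≤ ε * (1 - ε) * L ε ^ 2 := by
      have : (0:ℝ) ≤ ε * (1 - ε) := by nlinarith [hε.1, hε.2]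
      positivity
    have key : (ε * (1 - ε) * L ε ^ 2) ^ 2 + 2 * H ε * (ε * (1 - ε) * L ε ^ 2)
        - H ε * (ε * (1 - ε) * (1 - 2*ε) * L ε ^ 3)
        = (ε * (1 - ε) * L ε ^ 2) *
          (ε * (1 - ε) * L ε ^ 2 + 2 * H ε - H ε * (1 - 2*ε) * L ε) := by ring
    rw [key]
    exact mul_nonpos_of_nonneg_of_nonpos hV (le_of_lt hb)
  rw [eventually_nhdsWithin_iff] at hmain
  rcases Metric.eventually_nhds_iff.mp hmain with ⟨δ, hδ, hδ'⟩
  refine ⟨δ, hδ, fun ε hε0 hεδ => ?_⟩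
  have := hδ' (y := ε) (by rw [Real.dist_eq]; rw [abs_of_pos] <;> simpa) hε0
  simpa [hL_def, hH_def, hc_def] using this
end

section
/- Let θ = (θ_1,…,θ_k) be a probability vector with all θ_i > 0 and let τ(θ,α)_i = θ_i^α / Σ_j θ_j^α be the tilted distribution of order α. Then the derivative of the Shannon entropy of the tilted distribution with respect to α at α = 1 equals minus the varentropy: d/dα [H(τ(θ,α))]|_{α=1} = -V(θ), where H(μ) = Σ_i μ_i·log(1/μ_i) and V(θ) = Σ_i θ_i·(log(1/θ_i) - H(θ))². -/
/-
Writing Z(α) = ∑ θ_j^α, the entropy of the tilt is log Z − α Z'/Z, whose derivative is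
−α (Z''/Z − (Z'/Z)²), i.e. −α times the variance of log θ under τ(θ,α). At α = 1 the tilt is θ
itself and this variance is the varentropy.
-/

open Finset Real

section

variable {ι : Type*} [Fintype ι]

noncomputable def tilt (θ : ι → ℝ) (α : ℝ) (i : ι) : ℝ :=
  θ i ^ α / ∑ j, θ j ^ α

noncomputable def shannonEntropy (μ : ι → ℝ) : ℝ :=
  ∑ i, μ i * log (1 / μ i)

theorem sum_mul_sub_sum_mul_sq {p : ι → ℝ} (hp : ∑ i, p i = 1) (f : ι → ℝ) :
    ∑ i, p i * (f i - ∑ j, p j * f j) ^ 2 = ∑ i, p i * f i ^ 2 - (∑ i, p i * f i) ^ 2 := by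
  set m := ∑ j, p j * f j
  have hexpand : ∀ i, p i * (f i - m) ^ 2 = p i * f i ^ 2 - 2 * m * (p i * f i) + m ^ 2 * p i :=
    fun i => by ring
  simp only [hexpand, sum_add_distrib, sum_sub_distrib, ← mul_sum, hp]
  ring

variable {θ : ι → ℝ}

theorem sum_rpow_pos [Nonempty ι] (hθ : ∀ i, 0 < θ i) (α : ℝ) : 0 < ∑ j, θ j ^ α :=
  sum_pos (fun j _ => rpow_pos_of_pos (hθ j) α) univ_nonempty

theorem shannonEntropy_tilt [Nonempty ι] (hθ : ∀ i, 0 < θ i) (α : ℝ) :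
    shannonEntropy (tilt θ α) =
      log (∑ j, θ j ^ α) - α * (∑ j, θ j ^ α * log (θ j)) / ∑ j, θ j ^ α := by
  have hZ := (sum_rpow_pos hθ α).ne'
  have hterm : ∀ i, tilt θ α i * log (1 / tilt θ α i) =
      θ i ^ α / (∑ j, θ j ^ α) * log (∑ j, θ j ^ α)
        - α * (θ i ^ α * log (θ i)) / ∑ j, θ j ^ α := by
    intro i
    rw [tilt, one_div, log_inv, log_div (rpow_pos_of_pos (hθ i) α).ne' hZ, log_rpow (hθ i)]
    ring
  simp only [shannonEntropy, hterm, sum_sub_distrib, ← sum_div, ← sum_mul, ← mul_sum,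
    div_self hZ, one_mul]

theorem hasDerivAt_shannonEntropy_tilt [Nonempty ι] (hθ : ∀ i, 0 < θ i) (α : ℝ) :
    HasDerivAt (fun a => shannonEntropy (tilt θ a))
      (-α * ((∑ j, θ j ^ α * log (θ j) ^ 2) / ∑ j, θ j ^ α
        - ((∑ j, θ j ^ α * log (θ j)) / ∑ j, θ j ^ α) ^ 2)) α := by
  have hZ := (sum_rpow_pos hθ α).ne'
  have hderivZ : HasDerivAt (fun a => ∑ j, θ j ^ a) (∑ j, θ j ^ α * log (θ j)) α :=
    HasDerivAt.fun_sum fun j _ => (hasStrictDerivAt_const_rpow (hθ j) α).hasDerivAt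
  have hderivZ' : HasDerivAt (fun a => ∑ j, θ j ^ a * log (θ j))
      (∑ j, θ j ^ α * log (θ j) * log (θ j)) α :=
    HasDerivAt.fun_sum fun j _ =>
      (hasStrictDerivAt_const_rpow (hθ j) α).hasDerivAt.mul_const (log (θ j))
  have hderiv :=
    (hderivZ.log hZ).fun_sub (((hasDerivAt_id' α).fun_mul hderivZ').fun_div hderivZ hZ)
  rw [funext (shannonEntropy_tilt hθ)]
  refine hderiv.congr_deriv ?_
  field_simp
  ring

end

theorem stmt_17 {k : ℕ} (θ : Fin k → ℝ)
    (hpos : ∀ i, 0 < θ i) (hsum : ∑ i, θ i = 1)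
    (H V : ℝ)
    (hH : H = ∑ i, θ i * Real.log (1 / θ i))
    (hV : V = ∑ i, θ i * (Real.log (1 / θ i) - H) ^ 2) :
    HasDerivAt
      (fun α : ℝ =>
        ∑ i, (θ i ^ α / ∑ j, θ j ^ α) * Real.log (1 / (θ i ^ α / ∑ j, θ j ^ α)))
      (-V) 1 := by
  have : Nonempty (Fin k) := by
    by_contra h
    simp [not_nonempty_iff.mp h] at hsum
  have hV' : V = ∑ i, θ i * log (θ i) ^ 2 - (∑ i, θ i * log (θ i)) ^ 2 := by
    rw [hV, hH, sum_mul_sub_sum_mul_sq hsum]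
    simp only [one_div, log_inv, neg_sq, mul_neg, sum_neg_distrib]
  refine (hasDerivAt_shannonEntropy_tilt hpos 1).congr_deriv ?_
  simp only [rpow_one, hsum, div_one, hV']
  ring
end

section
/- Let θ = (θ_1,…,θ_k) be a probability vector with all θ_i > 0. For α > 0 define τ(θ,α)_i = θ_i^α / Σ_j θ_j^α, and the cross-entropy H(τ(θ,α)‖θ) = Σ_i τ(θ,α)_i·log(1/θ_i), and the cross-varentropy V(τ(θ,α)‖θ) = Σ_i τ(θ,α)_i·(log(1/θ_i) - H(τ(θ,α)‖θ))². Then d/dα [V(τ(θ,α)‖θ)]|_{α=1} = -S(θ), where S(θ) = Σ_i θ_i·(log(1/θ_i) - H(θ))³ and H(θ) = Σ_i θ_i·log(1/θ_i). -/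
/-!
Write `L i = log (1 / θ i)`. The tilted weights satisfy `τ' = -τ (L - H)`, where `H` is the
cross-entropy, so `H' = -V`. Differentiating `V = ∑ τ (L - H)²`, the term coming from `H'` is
a multiple of `∑ τ (L - H) = 0`, leaving `V' = -∑ τ (L - H)³` for every `α`; at `α = 1` the tilt
is `θ` itself.
-/

open Real Finset

namespace Tilt

variable {ι : Type*} [Fintype ι]

noncomputable def tilt (θ : ι → ℝ) (α : ℝ) (i : ι) : ℝ := θ i ^ α / ∑ j, θ j ^ α

noncomputable def crossEntropy (θ : ι → ℝ) (α : ℝ) : ℝ :=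
  ∑ i, tilt θ α i * log (1 / θ i)

noncomputable def crossVarentropy (θ : ι → ℝ) (α : ℝ) : ℝ :=
  ∑ i, tilt θ α i * (log (1 / θ i) - crossEntropy θ α) ^ 2

theorem tilt_one {θ : ι → ℝ} (hsum : ∑ i, θ i = 1) : tilt θ 1 = θ := by
  ext i
  simp [tilt, hsum]

theorem sum_rpow_pos [Nonempty ι] {θ : ι → ℝ} (hpos : ∀ i, 0 < θ i) (α : ℝ) :
    0 < ∑ j, θ j ^ α :=
  sum_pos (fun j _ => rpow_pos_of_pos (hpos j) α) univ_nonempty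

theorem sum_tilt [Nonempty ι] {θ : ι → ℝ} (hpos : ∀ i, 0 < θ i) (α : ℝ) :
    ∑ i, tilt θ α i = 1 := by
  simp only [tilt, ← sum_div]
  exact div_self (sum_rpow_pos hpos α).ne'

theorem sum_tilt_mul_sub_crossEntropy {θ : ι → ℝ} (hpos : ∀ i, 0 < θ i) (α : ℝ) :
    ∑ i, tilt θ α i * (log (1 / θ i) - crossEntropy θ α) = 0 := by
  cases isEmpty_or_nonempty ι
  · simp
  · simp only [mul_sub, sum_sub_distrib, ← sum_mul, sum_tilt hpos, crossEntropy]
    ring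

theorem hasDerivAt_tilt {θ : ι → ℝ} (hpos : ∀ i, 0 < θ i) (i : ι) (α : ℝ) :
    HasDerivAt (fun α => tilt θ α i)
      (-(tilt θ α i * (log (1 / θ i) - crossEntropy θ α))) α := by
  have : Nonempty ι := ⟨i⟩
  have hZ := sum_rpow_pos hpos α
  have hnum (j : ι) : HasDerivAt (fun α => θ j ^ α) (θ j ^ α * log (θ j)) α :=
    (hasStrictDerivAt_const_rpow (hpos j) α).hasDerivAt
  refine ((hnum i).fun_div (HasDerivAt.fun_sum fun j _ => hnum j) hZ.ne').congr_deriv ?_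
  simp only [crossEntropy, tilt, one_div, log_inv, mul_neg, sum_neg_distrib, div_mul_eq_mul_div,
    ← sum_div]
  field_simp
  ring

theorem hasDerivAt_crossEntropy {θ : ι → ℝ} (hpos : ∀ i, 0 < θ i) (α : ℝ) :
    HasDerivAt (crossEntropy θ) (-crossVarentropy θ α) α := by
  refine (HasDerivAt.fun_sum fun i _ =>
    (hasDerivAt_tilt hpos i α).mul_const (log (1 / θ i))).congr_deriv ?_
  have hcentre := congrArg (· * -crossEntropy θ α) (sum_tilt_mul_sub_crossEntropy hpos α)
  simp only [sum_mul, zero_mul] at hcentre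
  rw [crossVarentropy, ← sum_neg_distrib, ← sub_eq_zero, ← sum_sub_distrib]
  exact (sum_congr rfl fun i _ => by ring).trans hcentre

theorem hasDerivAt_crossVarentropy {θ : ι → ℝ} (hpos : ∀ i, 0 < θ i) (α : ℝ) :
    HasDerivAt (crossVarentropy θ)
      (-∑ i, tilt θ α i * (log (1 / θ i) - crossEntropy θ α) ^ 3) α := by
  have hdev (i : ι) := ((hasDerivAt_const α (log (1 / θ i))).fun_sub
    (hasDerivAt_crossEntropy hpos α)).fun_pow 2
  refine (HasDerivAt.fun_sum fun i _ =>
    (hasDerivAt_tilt hpos i α).fun_mul (hdev i)).congr_deriv ?_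
  have hcentre := congrArg (· * (2 * crossVarentropy θ α)) (sum_tilt_mul_sub_crossEntropy hpos α)
  simp only [sum_mul, zero_mul] at hcentre
  rw [← sum_neg_distrib, ← sub_eq_zero, ← sum_sub_distrib]
  exact (sum_congr rfl fun i _ => by push_cast; ring).trans hcentre

end Tilt

open Tilt in
theorem stmt_18 {k : ℕ} (θ : Fin k → ℝ)
    (hpos : ∀ i, 0 < θ i) (hsum : ∑ i, θ i = 1)
    (H S : ℝ)
    (hH : H = ∑ i, θ i * Real.log (1 / θ i))
    (hS : S = ∑ i, θ i * (Real.log (1 / θ i) - H) ^ 3) :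
    HasDerivAt
      (fun α : ℝ =>
        ∑ i, (θ i ^ α / ∑ j, θ j ^ α) *
          (Real.log (1 / θ i)
            - ∑ i', (θ i' ^ α / ∑ j, θ j ^ α) * Real.log (1 / θ i')) ^ 2)
      (-S) 1 := by
  have hH1 : crossEntropy θ 1 = H := by rw [crossEntropy, tilt_one hsum, hH]
  have h := hasDerivAt_crossVarentropy hpos 1
  rwa [tilt_one hsum, hH1, ← hS] at h
end
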